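/- With i.i.d. centered noise ε_0, …, ε_n in ℝ² with E[ε_j^(1) ε_j^(2)] = η₁₂, and weights α_1, …, α_M satisfying ∑_{i=1}^{M} α_i = 1 and ∑_{i=1}^{M} α_i/i = 0 (with M ≤ n/2), the multi-scale noise term ∑_{i=1}^{M} (α_i/i) ∑_{j=i}^{n} (ε_j^(1) - ε_{j-i}^(1))(ε_j^(2) - ε_{j-i}^(2)) has expectation -2 η₁₂. -/

import Mathlib

open MeasureTheory ProbabilityTheory

/-!
For `j ≠ k` the cross terms of `(ε₁ j - ε₁ k)(ε₂ j - ε₂ k)` integrate to zero, so every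
increment product has mean `2η`, and the lag-`i` sum over `j ∈ [i, n]` has mean
`2η (n + 1 - i)`. Weighting by `α i / i` gives `2η ((n + 1) ∑ α i / i - ∑ α i) = -2η`.
-/

section Bilinear

variable {Ω : Type*} [MeasurableSpace Ω] {μ : Measure Ω}

theorem integrable_sub_mul_sub {f₁ f₂ g₁ g₂ : Ω → ℝ}
    (h₁₁ : Integrable (fun ω => f₁ ω * g₁ ω) μ) (h₁₂ : Integrable (fun ω => f₁ ω * g₂ ω) μ)
    (h₂₁ : Integrable (fun ω => f₂ ω * g₁ ω) μ) (h₂₂ : Integrable (fun ω => f₂ ω * g₂ ω) μ) :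
    Integrable (fun ω => (f₁ ω - f₂ ω) * (g₁ ω - g₂ ω)) μ := by
  simp only [sub_mul, mul_sub]
  exact (h₁₁.sub h₂₁).sub (h₁₂.sub h₂₂)

theorem integral_sub_mul_sub {f₁ f₂ g₁ g₂ : Ω → ℝ}
    (h₁₁ : Integrable (fun ω => f₁ ω * g₁ ω) μ) (h₁₂ : Integrable (fun ω => f₁ ω * g₂ ω) μ)
    (h₂₁ : Integrable (fun ω => f₂ ω * g₁ ω) μ) (h₂₂ : Integrable (fun ω => f₂ ω * g₂ ω) μ) :
    ∫ ω, (f₁ ω - f₂ ω) * (g₁ ω - g₂ ω) ∂μ =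
      (∫ ω, f₁ ω * g₁ ω ∂μ) - (∫ ω, f₂ ω * g₁ ω ∂μ)
        - ((∫ ω, f₁ ω * g₂ ω ∂μ) - ∫ ω, f₂ ω * g₂ ω ∂μ) := by
  simp only [sub_mul, mul_sub]
  rw [integral_sub ?_ ?_, integral_sub h₁₁ h₂₁, integral_sub h₁₂ h₂₂]
  exacts [h₁₁.sub h₂₁, h₁₂.sub h₂₂]

end Bilinear

section Increments

variable {Ω : Type*} [MeasurableSpace Ω] {μ : Measure Ω} {ε₁ ε₂ : ℕ → Ω → ℝ} {η : ℝ}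
  (hint : ∀ j k, Integrable (fun ω => ε₁ j ω * ε₂ k ω) μ)
  (hsame : ∀ j, ∫ ω, ε₁ j ω * ε₂ j ω ∂μ = η)
  (hdiff : ∀ j k, j ≠ k → ∫ ω, ε₁ j ω * ε₂ k ω ∂μ = 0)
include hint

theorem integrable_increment_mul_increment (j k : ℕ) :
    Integrable (fun ω => (ε₁ j ω - ε₁ k ω) * (ε₂ j ω - ε₂ k ω)) μ :=
  integrable_sub_mul_sub (hint j j) (hint j k) (hint k j) (hint k k)

include hsame hdiff

theorem integral_increment_mul_increment {j k : ℕ} (hjk : j ≠ k) :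
    ∫ ω, (ε₁ j ω - ε₁ k ω) * (ε₂ j ω - ε₂ k ω) ∂μ = 2 * η := by
  rw [integral_sub_mul_sub (hint j j) (hint j k) (hint k j) (hint k k),
    hsame, hsame, hdiff j k hjk, hdiff k j hjk.symm]
  ring

theorem integral_sum_lag_increments {n i : ℕ} (hi : 0 < i) (hin : i ≤ n + 1) :
    ∫ ω, ∑ j ∈ Finset.Icc i n, (ε₁ j ω - ε₁ (j - i) ω) * (ε₂ j ω - ε₂ (j - i) ω) ∂μ =
      2 * η * ((n + 1 : ℝ) - i) := by
  rw [integral_finsetSum _ fun j _ => integrable_increment_mul_increment hint j (j - i),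
    Finset.sum_congr rfl fun j hj => integral_increment_mul_increment hint hsame hdiff
      (show j ≠ j - i by simp only [Finset.mem_Icc] at hj; omega),
    Finset.sum_const, Nat.card_Icc, nsmul_eq_mul, Nat.cast_sub hin]
  push_cast
  ring

end Increments

theorem sum_div_mul_sub_eq (s : Finset ℕ) (hs : ∀ i ∈ s, i ≠ 0) (α : ℕ → ℝ) (a : ℝ) :
    ∑ i ∈ s, α i / i * (a - i) = a * ∑ i ∈ s, α i / i - ∑ i ∈ s, α i := by
  rw [Finset.mul_sum, ← Finset.sum_sub_distrib]
  refine Finset.sum_congr rfl fun i hi => ?_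
  have : (i : ℝ) ≠ 0 := Nat.cast_ne_zero.mpr (hs i hi)
  field_simp

theorem stmt_8_general {Ω : Type*} [MeasureSpace Ω]
    (ε1 ε2 : ℕ → Ω → ℝ) (η12 : ℝ) (n M : ℕ) (hMn : 2 * M ≤ n)
    (α : ℕ → ℝ) (hα1 : ∑ i ∈ Finset.Icc 1 M, α i = 1)
    (hα2 : ∑ i ∈ Finset.Icc 1 M, α i / (i : ℝ) = 0)
    (hint : ∀ j k, Integrable (fun ω => ε1 j ω * ε2 k ω))
    (hsame : ∀ j, ∫ ω, ε1 j ω * ε2 j ω = η12)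
    (hdiff : ∀ j k, j ≠ k → ∫ ω, ε1 j ω * ε2 k ω = 0) :
    ∫ ω, ∑ i ∈ Finset.Icc 1 M, (α i / (i : ℝ)) *
        ∑ j ∈ Finset.Icc i n, (ε1 j ω - ε1 (j - i) ω) * (ε2 j ω - ε2 (j - i) ω) =
      -2 * η12 := by
  have hpos : ∀ i ∈ Finset.Icc 1 M, 0 < i ∧ i ≤ n + 1 := fun i hi => by
    simp only [Finset.mem_Icc] at hi; omega
  rw [integral_finsetSum _ fun i _ => (integrable_finsetSum _ fun j _ =>
      integrable_increment_mul_increment hint j (j - i)).const_mul _]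
  calc ∑ i ∈ Finset.Icc 1 M, ∫ ω, α i / i *
        ∑ j ∈ Finset.Icc i n, (ε1 j ω - ε1 (j - i) ω) * (ε2 j ω - ε2 (j - i) ω)
      = 2 * η12 * ∑ i ∈ Finset.Icc 1 M, α i / i * ((n + 1 : ℝ) - i) := by
        rw [Finset.mul_sum]
        refine Finset.sum_congr rfl fun i hi => ?_
        rw [integral_const_mul, integral_sum_lag_increments hint hsame hdiff
          (hpos i hi).1 (hpos i hi).2]
        ring
    _ = -2 * η12 := by
        rw [sum_div_mul_sub_eq _ (fun i hi => (hpos i hi).1.ne') α, hα1, hα2]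
        ring

/-- Expectation of the multi-scale noise term: with weights summing to one and weighted
reciprocal sums vanishing, the multi-scale noise term has expectation `-2 η₁₂`. -/
theorem stmt_8 {Ω : Type*} [MeasureSpace Ω] [IsProbabilityMeasure (ℙ : Measure Ω)]
    (ε1 ε2 : ℕ → Ω → ℝ) (η12 : ℝ) (n M : ℕ) (hM : 1 ≤ M) (hMn : 2 * M ≤ n)
    (α : ℕ → ℝ) (hα1 : ∑ i ∈ Finset.Icc 1 M, α i = 1)
    (hα2 : ∑ i ∈ Finset.Icc 1 M, α i / (i : ℝ) = 0)
    (hint : ∀ j k, Integrable (fun ω => ε1 j ω * ε2 k ω))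
    (hmean1 : ∀ j, ∫ ω, ε1 j ω = 0) (hmean2 : ∀ j, ∫ ω, ε2 j ω = 0)
    (hsame : ∀ j, ∫ ω, ε1 j ω * ε2 j ω = η12)
    (hdiff : ∀ j k, j ≠ k → ∫ ω, ε1 j ω * ε2 k ω = 0) :
    ∫ ω, ∑ i ∈ Finset.Icc 1 M, (α i / (i : ℝ)) *
        ∑ j ∈ Finset.Icc i n, (ε1 j ω - ε1 (j - i) ω) * (ε2 j ω - ε2 (j - i) ω) =
      -2 * η12 :=
  stmt_8_general ε1 ε2 η12 n M hMn α hα1 hα2 hint hsame hdiff
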